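/- arXiv:2508.00111 — 6 statements merged into one kernel-verified Lean document; each statement's English description precedes it below -/
import Mathlib

section
/- If A ∈ H_n is a positive semidefinite Hermitian matrix of rank one, then for every B = [b_{i,j}] ∈ H_n one has per(A∘B) ≤ per(A)·∏_{i=1}^n b_{i,i} (both sides being real numbers, since the permanent of a positive semidefinite Hermitian matrix is a nonnegative real and the diagonal entries b_{i,i} are nonnegative reals). -/
open Matrix Finset
open Equiv Nat
open scoped ComplexOrder

/-!
A matrix of rank one is `vecMulVec u v`, so each of its permutation products
`∏ i, u (σ i) * v i` equals the diagonal product `r = ∏ i, u i * v i`. Hence `per A = n! r` and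
`per (A ∘ B) = r per B`, and for `A ⪰ 0` the number `r` is real and nonnegative. The claim thus
reduces to `|per B| ≤ n! ∏ i, b i i` for `B ⪰ 0`, which holds term by term because the
`2 × 2` principal minors give `|b i j|² ≤ b i i b j j`.
-/

namespace Matrix

section PosSemidef

variable {n 𝕜 : Type*} [RCLike 𝕜]

theorem PosSemidef.norm_apply_sq_le {B : Matrix n n 𝕜} (hB : B.PosSemidef) (i j : n) :
    ‖B i j‖ ^ 2 ≤ RCLike.re (B i i) * RCLike.re (B j j) := by
  have hdet := (hB.submatrix ![i, j]).det_nonneg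
  simp only [det_fin_two, submatrix_apply, cons_val_zero, cons_val_one] at hdet
  rw [← hB.isHermitian.apply j i, ← hB.isHermitian.coe_re_apply_self i,
    ← hB.isHermitian.coe_re_apply_self j, RCLike.star_def, RCLike.mul_conj] at hdet
  exact sub_nonneg.mp (by exact_mod_cast hdet)

variable [Fintype n]

theorem PosSemidef.norm_prod_apply_perm_le {B : Matrix n n 𝕜} (hB : B.PosSemidef)
    (σ : Perm n) : ‖∏ i, B (σ i) i‖ ≤ ∏ i, RCLike.re (B i i) := by
  have hdiag : 0 ≤ ∏ i, RCLike.re (B i i) :=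
    prod_nonneg fun i _ => (RCLike.nonneg_iff.mp hB.diag_nonneg).1
  refine (pow_le_pow_iff_left₀ (norm_nonneg _) hdiag two_ne_zero).mp ?_
  calc ‖∏ i, B (σ i) i‖ ^ 2 = ∏ i, ‖B (σ i) i‖ ^ 2 := by rw [norm_prod, prod_pow]
    _ ≤ ∏ i, RCLike.re (B (σ i) (σ i)) * RCLike.re (B i i) :=
      prod_le_prod (fun i _ => by positivity) fun i _ => hB.norm_apply_sq_le (σ i) i
    _ = (∏ i, RCLike.re (B i i)) ^ 2 := by
      rw [prod_mul_distrib, Equiv.prod_comp σ (fun i => RCLike.re (B i i)), sq]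

theorem PosSemidef.norm_permanent_le [DecidableEq n] {B : Matrix n n 𝕜} (hB : B.PosSemidef) :
    ‖B.permanent‖ ≤ (Fintype.card n)! * ∏ i, RCLike.re (B i i) :=
  calc ‖B.permanent‖ ≤ ∑ σ : Perm n, ‖∏ i, B (σ i) i‖ := norm_sum_le _ _
    _ ≤ ∑ _σ : Perm n, ∏ i, RCLike.re (B i i) :=
      sum_le_sum fun σ _ => hB.norm_prod_apply_perm_le σ
    _ = (Fintype.card n)! * ∏ i, RCLike.re (B i i) := by
      rw [sum_const, Finset.card_univ, Fintype.card_perm, nsmul_eq_mul]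

end PosSemidef

section VecMulVec

variable {n R : Type*} [Fintype n] [CommSemiring R]

theorem prod_vecMulVec_apply_perm (u v : n → R) (σ : Perm n) :
    ∏ i, vecMulVec u v (σ i) i = ∏ i, u i * v i := by
  simp only [vecMulVec_apply, prod_mul_distrib, Equiv.prod_comp σ u]

variable [DecidableEq n]

theorem permanent_vecMulVec (u v : n → R) :
    (vecMulVec u v).permanent = (Fintype.card n)! * ∏ i, u i * v i := by
  simp only [permanent, prod_vecMulVec_apply_perm, sum_const, Finset.card_univ,
    Fintype.card_perm, nsmul_eq_mul]

theorem permanent_vecMulVec_hadamard (u v : n → R) (B : Matrix n n R) :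
    (vecMulVec u v ⊙ B).permanent = (∏ i, u i * v i) * B.permanent := by
  simp only [permanent, mul_sum, hadamard_apply, prod_mul_distrib, prod_vecMulVec_apply_perm]

end VecMulVec

theorem exists_eq_vecMulVec_of_rank_le_one {m n K : Type*} [Fintype n] [DecidableEq n] [Field K]
    {A : Matrix m n K} (hA : A.rank ≤ 1) : ∃ u v, A = vecMulVec u v := by
  rw [rank, finrank_le_one_iff] at hA
  obtain ⟨⟨u, _⟩, hu⟩ := hA
  have hcol : ∀ j, ∃ c : K, c • u = A *ᵥ Pi.single j 1 := fun j => by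
    obtain ⟨c, hc⟩ := hu ⟨_, LinearMap.mem_range_self A.mulVecLin (Pi.single j 1)⟩
    exact ⟨c, congrArg Subtype.val hc⟩
  choose v hv using hcol
  refine ⟨u, v, ext fun i j => ?_⟩
  simpa [vecMulVec_apply, mul_comm] using (congrFun (hv j) i).symm

end Matrix

/-- If `A` is a rank-one positive semidefinite Hermitian matrix, then for every
positive semidefinite Hermitian `B` one has `per(A ∘ B) ≤ per(A) · ∏ i, B i i`
(as real numbers). -/
theorem stmt0 {n : ℕ} (A : Matrix (Fin n) (Fin n) ℂ) (hA : A.PosSemidef) (hrank : A.rank = 1)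
    (B : Matrix (Fin n) (Fin n) ℂ) (hB : B.PosSemidef) :
    (Matrix.hadamard A B).permanent.re ≤ A.permanent.re * ∏ i, (B i i).re := by
  obtain ⟨u, v, rfl⟩ := exists_eq_vecMulVec_of_rank_le_one hrank.le
  set r := ∏ i, (vecMulVec u v i i).re
  have hr : ∏ i, u i * v i = r := by
    rw [Complex.ofReal_prod]
    exact prod_congr rfl fun i _ => (hA.isHermitian.coe_re_apply_self i).symm
  have hr0 : 0 ≤ r := prod_nonneg fun i _ => (RCLike.nonneg_iff.mp hA.diag_nonneg).1
  have hB_per : B.permanent.re ≤ n ! * ∏ i, (B i i).re := by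
    simpa using (Complex.re_le_norm _).trans hB.norm_permanent_le
  rw [permanent_vecMulVec_hadamard, permanent_vecMulVec, hr, Fintype.card_fin,
    Complex.re_ofReal_mul, ← Complex.ofReal_natCast, ← Complex.ofReal_mul, Complex.ofReal_re]
  calc r * B.permanent.re ≤ r * (n ! * ∏ i, (B i i).re) := by gcongr
    _ = n ! * r * ∏ i, (B i i).re := by ring
end

section
/- If A ∈ H_n has all entries nonnegative real numbers (a_{i,j} ≥ 0 for all i, j), then for every B = [b_{i,j}] ∈ H_n one has per(A∘B) ≤ per(A)·∏_{i=1}^n b_{i,i} (both sides being real numbers, since the permanent of a positive semidefinite Hermitian matrix is a nonnegative real and the diagonal entries b_{i,i} are nonnegative reals). -/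
/-!
Expanding the permanent, the term of `A ⊙ B` indexed by `σ` has modulus
`∏ |a_{σ i, i}| · ∏ |b_{σ i, i}|`. Writing `B` as a Gram matrix, Cauchy–Schwarz gives
`|b_{ij}| ≤ √(b_{ii} b_{jj})`, so `∏ |b_{σ i, i}| ≤ ∏ b_{ii}`; and when the entries of `A` are
nonnegative the remaining sum `∑_σ ∏ a_{σ i, i}` is `per A`.
-/

open Matrix Finset
open scoped ComplexOrder InnerProductSpace MatrixOrder

namespace Matrix

variable {n : Type*} [Fintype n] {𝕜 : Type*} [RCLike 𝕜]

theorem PosSemidef.exists_eq_gram {B : Matrix n n 𝕜} (hB : B.PosSemidef) :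
    ∃ v : n → EuclideanSpace 𝕜 n, B = gram 𝕜 v := by
  classical
  obtain ⟨M, rfl⟩ := CStarAlgebra.nonneg_iff_eq_star_mul_self.mp hB.nonneg
  refine ⟨fun j ↦ WithLp.toLp 2 fun k ↦ M k j, ?_⟩
  ext i j
  simp [gram_apply, mul_apply, PiLp.inner_apply, mul_comm]

theorem PosSemidef.norm_apply_le {B : Matrix n n 𝕜} (hB : B.PosSemidef) (i j : n) :
    ‖B i j‖ ≤ √(RCLike.re (B i i)) * √(RCLike.re (B j j)) := by
  obtain ⟨v, rfl⟩ := hB.exists_eq_gram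
  simp only [gram_apply, inner_self_eq_norm_sq, Real.sqrt_sq (norm_nonneg _)]
  exact norm_inner_le_norm _ _

theorem PosSemidef.prod_norm_apply_perm_le {B : Matrix n n 𝕜} (hB : B.PosSemidef)
    (σ : Equiv.Perm n) : ∏ i, ‖B (σ i) i‖ ≤ ∏ i, RCLike.re (B i i) :=
  calc ∏ i, ‖B (σ i) i‖
      ≤ ∏ i, √(RCLike.re (B (σ i) (σ i))) * √(RCLike.re (B i i)) :=
        prod_le_prod (fun _ _ ↦ norm_nonneg _) fun i _ ↦ hB.norm_apply_le (σ i) i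
    _ = ∏ i, √(RCLike.re (B i i)) * √(RCLike.re (B i i)) := by
        rw [prod_mul_distrib, prod_mul_distrib, Equiv.prod_comp σ fun i ↦ √(RCLike.re (B i i))]
    _ = ∏ i, RCLike.re (B i i) :=
        prod_congr rfl fun i _ ↦ Real.mul_self_sqrt (RCLike.nonneg_iff.mp hB.diag_nonneg).1

variable [DecidableEq n]

theorem permanent_map {R S : Type*} [CommSemiring R] [CommSemiring S] (f : R →+* S)
    (M : Matrix n n R) : (M.map f).permanent = f M.permanent := by
  simp [permanent, map_sum, map_prod]

theorem norm_permanent_hadamard_le (A : Matrix n n 𝕜) {B : Matrix n n 𝕜} (hB : B.PosSemidef) :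
    ‖(A ⊙ B).permanent‖ ≤ (A.map (‖·‖)).permanent * ∏ i, RCLike.re (B i i) :=
  calc ‖(A ⊙ B).permanent‖
      ≤ ∑ σ : Equiv.Perm n, (∏ i, ‖A (σ i) i‖) * ∏ i, ‖B (σ i) i‖ := by
        refine (norm_sum_le _ _).trans_eq (sum_congr rfl fun σ _ ↦ ?_)
        simp only [hadamard_apply, norm_prod, norm_mul, prod_mul_distrib]
    _ ≤ ∑ σ : Equiv.Perm n, (∏ i, ‖A (σ i) i‖) * ∏ i, RCLike.re (B i i) :=
        sum_le_sum fun σ _ ↦ mul_le_mul_of_nonneg_left (hB.prod_norm_apply_perm_le σ)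
          (prod_nonneg fun _ _ ↦ norm_nonneg _)
    _ = (A.map (‖·‖)).permanent * ∏ i, RCLike.re (B i i) := by
        simp only [permanent, map_apply, sum_mul]

theorem re_permanent_eq_permanent_map_norm {A : Matrix n n ℂ} (hA : ∀ i j, 0 ≤ A i j) :
    A.permanent.re = (A.map (‖·‖)).permanent := by
  have hA' : (A.map (‖·‖)).map Complex.ofRealHom = A := by
    ext i j
    exact (Complex.eq_coe_norm_of_nonneg (hA i j)).symm
  conv_lhs => rw [← hA']
  rw [permanent_map]
  exact Complex.ofReal_re _

end Matrix

theorem stmt1_general {n : ℕ} (A : Matrix (Fin n) (Fin n) ℂ)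
    (hAnonneg : ∀ i j, (A i j).im = 0 ∧ 0 ≤ (A i j).re)
    (B : Matrix (Fin n) (Fin n) ℂ) (hB : B.PosSemidef) :
    (Matrix.hadamard A B).permanent.re ≤ A.permanent.re * ∏ i, (B i i).re := by
  have hA : ∀ i j, 0 ≤ A i j := fun i j ↦
    Complex.nonneg_iff.mpr ⟨(hAnonneg i j).2, (hAnonneg i j).1.symm⟩
  calc (A ⊙ B).permanent.re
      ≤ ‖(A ⊙ B).permanent‖ := Complex.re_le_norm _
    _ ≤ (A.map (‖·‖)).permanent * ∏ i, (B i i).re := norm_permanent_hadamard_le A hB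
    _ = A.permanent.re * ∏ i, (B i i).re := by rw [re_permanent_eq_permanent_map_norm hA]

/-- If `A` is positive semidefinite Hermitian with all entries nonnegative reals,
then for every positive semidefinite Hermitian `B` one has
`per(A ∘ B) ≤ per(A) · ∏ i, B i i` (as real numbers). -/
theorem stmt1 {n : ℕ} (A : Matrix (Fin n) (Fin n) ℂ) (hA : A.PosSemidef)
    (hAnonneg : ∀ i j, (A i j).im = 0 ∧ 0 ≤ (A i j).re)
    (B : Matrix (Fin n) (Fin n) ℂ) (hB : B.PosSemidef) :
    (Matrix.hadamard A B).permanent.re ≤ A.permanent.re * ∏ i, (B i i).re :=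
  stmt1_general A hAnonneg B hB
end

section
/- Let A ∈ H_n, let v ∈ ℂ^n be a vector with ‖v‖₂ = 1, and for ε ≥ 0 define the n×n matrix B(ε) = M(ε)*M(ε), where M(ε) is the 2×n matrix with first row (1/α_1, …, 1/α_n) and second row (ε v_1/α_1, …, ε v_n/α_n), with α_i = √(1 + ε²|v_i|²). Then per(A∘B(ε)) = per(A) + ε²·(v*F_A v − per(A)) + O(ε⁴) as ε → 0⁺; precisely, there exist constants C > 0 and δ > 0 such that for all ε with 0 ≤ ε ≤ δ one has |per(A∘B(ε)) − per(A) − ε²·(v*F_A v − per(A))| ≤ C·ε⁴. -/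
/-!
With `α_k² = 1 + ε²|v_k|²`, the matrix `B(ε)` is `diag(α)⁻¹ (J + ε² v̄ vᵀ) diag(α)⁻¹`, so
`∏ α_k² · per (A ∘ B(ε)) = N(ε²)` for the polynomial `N(t) = per (A ∘ (J + t v̄ vᵀ))`.
Expanding the permanent along a column gives `N(0) = per A` and `N'(0) = v* F_A v`, while
`D(t) = ∏ (1 + t|v_k|²)` has `D(0) = 1` and `D'(0) = ‖v‖² = 1`. Hence
`N - (per A + t (v* F_A v - per A)) D` is divisible by `t²`, and dividing by `D ≥ 1` gives
the `O(ε⁴)` bound.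
-/

open Matrix Finset
open scoped ComplexOrder

/-- `F_A`, with entries `f i j = A i j * per (A(i,j))`, where `A(i,j)` is obtained from `A` by
deleting the `i`-th row and the `j`-th column. -/
noncomputable def Fmat {n : ℕ} (A : Matrix (Fin (n + 1)) (Fin (n + 1)) ℂ) :
    Matrix (Fin (n + 1)) (Fin (n + 1)) ℂ :=
  Matrix.of fun i j => A i j * (A.submatrix i.succAbove j.succAbove).permanent

/-- The `2 × n` matrix `M(ε)` with rows `(1/α_1, …, 1/α_n)` and
`(ε v_1/α_1, …, ε v_n/α_n)`, where `α_i = √(1 + ε²|v_i|²)`. -/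
noncomputable def Mmat {n : ℕ} (v : Fin n → ℂ) (ε : ℝ) : Matrix (Fin 2) (Fin n) ℂ :=
  Matrix.of
    ![fun i => ((Real.sqrt (1 + ε ^ 2 * ‖v i‖ ^ 2) : ℝ) : ℂ)⁻¹,
      fun i => (ε : ℂ) * v i * ((Real.sqrt (1 + ε ^ 2 * ‖v i‖ ^ 2) : ℝ) : ℂ)⁻¹]

/-- `B(ε) = M(ε)* M(ε)`. -/
noncomputable def Bmat {n : ℕ} (v : Fin n → ℂ) (ε : ℝ) : Matrix (Fin n) (Fin n) ℂ :=
  (Mmat v ε)ᴴ * Mmat v ε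

namespace Fin

open Equiv

variable {n : ℕ}

def succAbovePerm (i j : Fin (n + 1)) (τ : Perm (Fin n)) : Perm (Fin (n + 1)) :=
  (finSuccEquiv' i).trans (τ.optionCongr.trans (finSuccEquiv' j).symm)

@[simp] lemma succAbovePerm_apply_self (i j : Fin (n + 1)) (τ : Perm (Fin n)) :
    succAbovePerm i j τ i = j := by
  simp [succAbovePerm, finSuccEquiv'_at]

@[simp] lemma succAbovePerm_apply_succAbove (i j : Fin (n + 1)) (τ : Perm (Fin n)) (k : Fin n) :
    succAbovePerm i j τ (i.succAbove k) = j.succAbove (τ k) := by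
  simp [succAbovePerm, finSuccEquiv'_succAbove, finSuccEquiv'_symm_some]

lemma succAbovePerm_bijective (i : Fin (n + 1)) :
    Function.Bijective fun p : Fin (n + 1) × Perm (Fin n) => succAbovePerm i p.1 p.2 := by
  refine (Fintype.bijective_iff_injective_and_card _).mpr ⟨?_, ?_⟩
  · rintro ⟨j, τ⟩ ⟨j', τ'⟩ h
    obtain rfl : j = j' := by simpa using congr($h i)
    refine Prod.ext rfl (optionCongr_injective (Equiv.ext fun o => ?_))
    simpa [succAbovePerm] using congr(finSuccEquiv' j ($h ((finSuccEquiv' i).symm o)))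
  · simp [Fintype.card_perm, Nat.factorial_succ]

end Fin

namespace Matrix

open Equiv

variable {n : ℕ} {R : Type*} [CommSemiring R]

/-- Column expansion of the permanent, weighted by the row matched with column `i`;
`x = 1` is the usual expansion. -/
lemma sum_perm_prod_mul_apply (A : Matrix (Fin (n + 1)) (Fin (n + 1)) R) (x : Fin (n + 1) → R)
    (i : Fin (n + 1)) :
    ∑ σ : Perm (Fin (n + 1)), (∏ k, A (σ k) k) * x (σ i)
      = ∑ j, x j * A j i * (A.submatrix j.succAbove i.succAbove).permanent := by
  rw [← (Fin.succAbovePerm_bijective i).sum_comp, Fintype.sum_prod_type]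
  refine Finset.sum_congr rfl fun j _ => ?_
  simp only [permanent, Finset.mul_sum, Fin.prod_univ_succAbove _ i, Fin.succAbovePerm_apply_self,
    Fin.succAbovePerm_apply_succAbove, submatrix_apply]
  exact Finset.sum_congr rfl fun τ _ => by ring

end Matrix

open Equiv in
lemma sum_mul_Fmat_mul_eq {n : ℕ} (A : Matrix (Fin (n + 1)) (Fin (n + 1)) ℂ)
    (x y : Fin (n + 1) → ℂ) :
    ∑ i, ∑ j, x i * Fmat A i j * y j
      = ∑ σ : Perm (Fin (n + 1)), (∏ k, A (σ k) k) * ∑ k, x (σ k) * y k := by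
  calc ∑ i, ∑ j, x i * Fmat A i j * y j
      = ∑ j, (∑ i, x i * A i j * (A.submatrix i.succAbove j.succAbove).permanent) * y j := by
        rw [Finset.sum_comm]
        simp only [Fmat, of_apply, Finset.sum_mul, mul_assoc]
    _ = ∑ j, (∑ σ : Perm (Fin (n + 1)), (∏ k, A (σ k) k) * x (σ j)) * y j := by
        simp_rw [Matrix.sum_perm_prod_mul_apply]
    _ = _ := by
        simp_rw [Finset.sum_mul, Finset.mul_sum, mul_assoc]
        exact Finset.sum_comm

namespace Polynomial

variable {R ι : Type*} [CommSemiring R]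

lemma coeff_zero_prod_one_add_C_mul_X (s : Finset ι) (a : ι → R) :
    (∏ k ∈ s, (1 + C (a k) * X)).coeff 0 = 1 := by
  simp [coeff_zero_eq_eval_zero, eval_prod]

lemma coeff_one_prod_one_add_C_mul_X [DecidableEq ι] (s : Finset ι) (a : ι → R) :
    (∏ k ∈ s, (1 + C (a k) * X)).coeff 1 = ∑ k ∈ s, a k := by
  induction s using Finset.induction_on with
  | empty => simp [coeff_one]
  | insert j s hj ih =>
    rw [Finset.prod_insert hj, Finset.sum_insert hj, add_mul, one_mul, mul_assoc, coeff_add,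
      coeff_C_mul, coeff_X_mul, coeff_zero_prod_one_add_C_mul_X, ih]
    ring

/-- `N - (c₀ + c₁ X) D` vanishes to second order when `c₀ + c₁ X` is the first-order Taylor
polynomial of `N / D`. -/
lemma X_sq_dvd_sub_mul {R : Type*} [CommRing R] (N D : R[X]) (hD : D.coeff 0 = 1) :
    X ^ 2 ∣ N - (C (N.coeff 0) + C (N.coeff 1 - N.coeff 0 * D.coeff 1) * X) * D := by
  rw [X_pow_dvd_iff]
  intro d hd
  interval_cases d
  · simp only [coeff_sub, add_mul, coeff_add, coeff_C_mul, mul_assoc, coeff_X_mul_zero, hD]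
    ring
  · simp only [coeff_sub, add_mul, coeff_add, coeff_C_mul, mul_assoc, coeff_X_mul, hD]
    ring

lemma exists_norm_eval_le_of_X_pow_dvd {𝕜 : Type*} [NormedField 𝕜] {p : 𝕜[X]} {m : ℕ}
    (h : X ^ m ∣ p) : ∃ C > (0 : ℝ), ∀ x : 𝕜, ‖x‖ ≤ 1 → ‖p.eval x‖ ≤ C * ‖x‖ ^ m := by
  obtain ⟨q, rfl⟩ := h
  refine ⟨∑ k ∈ Finset.range (q.natDegree + 1), ‖q.coeff k‖ + 1, by positivity, fun x hx => ?_⟩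
  have hq : ‖q.eval x‖ ≤ ∑ k ∈ Finset.range (q.natDegree + 1), ‖q.coeff k‖ := by
    rw [eval_eq_sum_range]
    refine (norm_sum_le _ _).trans (Finset.sum_le_sum fun k _ => ?_)
    rw [norm_mul, norm_pow]
    exact mul_le_of_le_one_right (norm_nonneg _) (pow_le_one₀ (norm_nonneg x) hx)
  rw [eval_mul, eval_pow, eval_X, norm_mul, norm_pow, mul_comm]
  gcongr
  linarith

lemma one_le_norm_eval_prod_one_add_C_mul_X (s : Finset ι) {a : ι → ℝ} (ha : ∀ k, 0 ≤ a k)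
    {t : ℝ} (ht : 0 ≤ t) : 1 ≤ ‖(∏ k ∈ s, (1 + C (a k : ℂ) * X)).eval (t : ℂ)‖ := by
  rw [eval_prod, norm_prod]
  refine Finset.one_le_prod fun k _ => ?_
  simp only [eval_add, eval_one, eval_mul, eval_C, eval_X]
  rw [← Complex.ofReal_mul, ← Complex.ofReal_one, ← Complex.ofReal_add, Complex.norm_real,
    Real.norm_of_nonneg (by linarith [mul_nonneg (ha k) ht])]
  linarith [mul_nonneg (ha k) ht]

end Polynomial

namespace Matrix

open Polynomial Equiv

variable {m R : Type*} [Fintype m] [DecidableEq m] [CommSemiring R]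

lemma permanent_hadamard_of_eq_mul_mul (A B E : Matrix m m R) (d : m → R)
    (hB : ∀ p q, B p q = d p * d q * E p q) :
    (A ⊙ B).permanent = (∏ k, d k) ^ 2 * (A ⊙ E).permanent := by
  simp only [permanent, hadamard_apply, hB, Finset.mul_sum]
  refine Finset.sum_congr rfl fun σ _ => ?_
  simp only [Finset.prod_mul_distrib, Equiv.prod_comp σ d]
  ring

noncomputable def permanentPoly (A U : Matrix m m R) : R[X] :=
  (A.map C ⊙ of fun p q => 1 + C (U p q) * X).permanent

lemma permanentPoly_eq_sum (A U : Matrix m m R) :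
    permanentPoly A U = ∑ σ : Perm m, C (∏ k, A (σ k) k) * ∏ k, (1 + C (U (σ k) k) * X) := by
  simp only [permanentPoly, permanent, hadamard_apply, map_apply, of_apply,
    Finset.prod_mul_distrib, map_prod]

lemma eval_permanentPoly (A U : Matrix m m R) (t : R) :
    (permanentPoly A U).eval t = (A ⊙ of fun p q => 1 + t * U p q).permanent := by
  simp only [permanentPoly_eq_sum, permanent, hadamard_apply, of_apply, eval_finsetSum,
    eval_mul, eval_prod, eval_C, eval_add, eval_one, eval_X, Finset.prod_mul_distrib, mul_comm t]

lemma coeff_zero_permanentPoly (A U : Matrix m m R) :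
    (permanentPoly A U).coeff 0 = A.permanent := by
  simp only [permanentPoly_eq_sum, finsetSum_coeff, coeff_C_mul,
    coeff_zero_prod_one_add_C_mul_X, mul_one, permanent]

lemma coeff_one_permanentPoly (A U : Matrix m m R) :
    (permanentPoly A U).coeff 1 = ∑ σ : Perm m, (∏ k, A (σ k) k) * ∑ k, U (σ k) k := by
  simp only [permanentPoly_eq_sum, finsetSum_coeff, coeff_C_mul,
    coeff_one_prod_one_add_C_mul_X]

end Matrix

lemma Bmat_apply {n : ℕ} (v : Fin n → ℂ) (ε : ℝ) (p q : Fin n) :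
    Bmat v ε p q = ((√(1 + ε ^ 2 * ‖v p‖ ^ 2) : ℝ) : ℂ)⁻¹ * ((√(1 + ε ^ 2 * ‖v q‖ ^ 2) : ℝ) : ℂ)⁻¹
      * (1 + (ε : ℂ) ^ 2 * (star (v p) * v q)) := by
  simp only [Bmat, Mmat, mul_apply, conjTranspose_apply, Fin.sum_univ_two, of_apply,
    cons_val_zero, cons_val_one, Complex.star_def, map_mul, map_inv₀, Complex.conj_ofReal]
  ring

lemma prod_mul_permanent_hadamard_Bmat {n : ℕ} (A : Matrix (Fin n) (Fin n) ℂ) (v : Fin n → ℂ)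
    (ε : ℝ) :
    (∏ k, (1 + Polynomial.C ((‖v k‖ ^ 2 : ℝ) : ℂ) * Polynomial.X)).eval ((ε : ℂ) ^ 2)
        * (A ⊙ Bmat v ε).permanent
      = (permanentPoly A (vecMulVec (star v) v)).eval ((ε : ℂ) ^ 2) := by
  rw [permanent_hadamard_of_eq_mul_mul _ _ _ _ (Bmat_apply v ε), eval_permanentPoly,
    ← mul_assoc, Polynomial.eval_prod, ← Finset.prod_pow, ← Finset.prod_mul_distrib,
    Finset.prod_eq_one fun k _ => ?_, one_mul]
  · rfl
  have hpos : 0 < 1 + ε ^ 2 * ‖v k‖ ^ 2 := by positivity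
  have heval : (1 + Polynomial.C ((‖v k‖ ^ 2 : ℝ) : ℂ) * Polynomial.X).eval ((ε : ℂ) ^ 2)
      = ((1 + ε ^ 2 * ‖v k‖ ^ 2 : ℝ) : ℂ) := by
    simp only [Polynomial.eval_add, Polynomial.eval_one, Polynomial.eval_mul, Polynomial.eval_C,
      Polynomial.eval_X]
    push_cast
    ring
  rw [heval, inv_pow, ← Complex.ofReal_pow, Real.sq_sqrt hpos.le,
    mul_inv_cancel₀ (Complex.ofReal_ne_zero.mpr hpos.ne')]

open Polynomial in
theorem stmt3_general {n : ℕ} (A : Matrix (Fin (n + 1)) (Fin (n + 1)) ℂ)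
    (v : Fin (n + 1) → ℂ) (hv : ∑ i, ‖v i‖ ^ 2 = 1) :
    ∃ C > (0 : ℝ), ∃ δ > (0 : ℝ), ∀ ε : ℝ, 0 ≤ ε → ε ≤ δ →
      ‖((Matrix.hadamard A (Bmat v ε)).permanent - A.permanent -
          (ε : ℂ) ^ 2 * ((∑ i, ∑ j, (starRingEnd ℂ) (v i) * Fmat A i j * v j) - A.permanent))‖
        ≤ C * ε ^ 4 := by
  set N := permanentPoly A (vecMulVec (star v) v)
  set D : ℂ[X] := ∏ k, (1 + C ((‖v k‖ ^ 2 : ℝ) : ℂ) * X)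
  have hD1 : D.coeff 1 = 1 := by
    rw [coeff_one_prod_one_add_C_mul_X, ← Complex.ofReal_sum, hv, Complex.ofReal_one]
  obtain ⟨K, hK, hbound⟩ := exists_norm_eval_le_of_X_pow_dvd
    (X_sq_dvd_sub_mul N D (coeff_zero_prod_one_add_C_mul_X _ _))
  refine ⟨K, hK, 1, one_pos, fun ε hε₀ hε₁ => ?_⟩
  set t : ℂ := (ε : ℂ) ^ 2
  have ht : ‖t‖ = ε ^ 2 := by simp [t]
  have hD : 1 ≤ ‖D.eval t‖ := by
    have := one_le_norm_eval_prod_one_add_C_mul_X Finset.univ (fun k => sq_nonneg ‖v k‖)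
      (sq_nonneg ε)
    rwa [Complex.ofReal_pow] at this
  have hN : N.eval t = D.eval t * (A ⊙ Bmat v ε).permanent :=
    (prod_mul_permanent_hadamard_Bmat A v ε).symm
  set err := (A ⊙ Bmat v ε).permanent - A.permanent -
    t * ((∑ i, ∑ j, (starRingEnd ℂ) (v i) * Fmat A i j * v j) - A.permanent) with herr
  have hfactor : D.eval t * err
      = (N - (C (N.coeff 0) + C (N.coeff 1 - N.coeff 0 * D.coeff 1) * X) * D).eval t := by
    rw [herr, eval_sub, eval_mul, hN, coeff_zero_permanentPoly, coeff_one_permanentPoly, hD1,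
      sum_mul_Fmat_mul_eq]
    simp only [eval_add, eval_mul, eval_C, eval_X, vecMulVec_apply, Pi.star_apply, Complex.star_def]
    ring
  calc ‖err‖ ≤ ‖D.eval t‖ * ‖err‖ := le_mul_of_one_le_left (norm_nonneg _) hD
    _ ≤ K * ‖t‖ ^ 2 := by
        rw [← norm_mul, hfactor]
        exact hbound t (by rw [ht]; nlinarith)
    _ = K * ε ^ 4 := by rw [ht]; ring

/-- For `A` positive semidefinite Hermitian and `v` a unit vector,
`per(A ∘ B(ε)) = per(A) + ε² (v* F_A v − per(A)) + O(ε⁴)` as `ε → 0⁺`. -/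
theorem stmt3 {n : ℕ} (A : Matrix (Fin (n + 1)) (Fin (n + 1)) ℂ) (hA : A.PosSemidef)
    (v : Fin (n + 1) → ℂ) (hv : ∑ i, ‖v i‖ ^ 2 = 1) :
    ∃ C > (0 : ℝ), ∃ δ > (0 : ℝ), ∀ ε : ℝ, 0 ≤ ε → ε ≤ δ →
      ‖((Matrix.hadamard A (Bmat v ε)).permanent - A.permanent -
          (ε : ℂ) ^ 2 * ((∑ i, ∑ j, (starRingEnd ℂ) (v i) * Fmat A i j * v j) - A.permanent))‖
        ≤ C * ε ^ 4 :=
  stmt3_general A v hv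
end

section
/- Let A ∈ H_n (with n ≥ 1) be such that per(A∘B) ≤ per(A)·∏_{i=1}^n b_{i,i} holds for every B = [b_{i,j}] ∈ H_n. Then for every vector v ∈ ℂ^n one has v*F_A v ≤ per(A)·‖v‖₂²; equivalently, the largest eigenvalue of the Hermitian matrix F_A is at most per(A). -/
/-!
Fix `v` and let `C = [conj vᵢ * vⱼ]` and `J` the all-ones matrix. For `t ≥ 0` the matrix
`J + t • C` is positive semidefinite with diagonal entries `1 + t ‖vᵢ‖²`, and
`A ∘ (J + t • C) = A + t • (A ∘ C)`. So the hypothesis gives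
`per (A + t • (A ∘ C)) ≤ per A * ∏ i, (1 + t ‖vᵢ‖²)` for `t ≥ 0`, with equality at `t = 0`, and the
same inequality holds between the derivatives at `0`. Expanding the permanent along each column,
the derivative of `t ↦ per (M + t • N)` at `0` is `∑ i j, N i j * per (M(i,j))`, which for
`M = A`, `N = A ∘ C` is `v* F_A v`; the right-hand side has derivative `per A * ‖v‖²`.
-/

open Matrix Finset
open scoped ComplexOrder

namespace Matrix

variable {R : Type*} [CommSemiring R]

theorem permanent_succ_column_zero {n : ℕ} (A : Matrix (Fin (n + 1)) (Fin (n + 1)) R) :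
    A.permanent = ∑ i, A i 0 * (A.submatrix i.succAbove Fin.succ).permanent := by
  rw [permanent, Finset.univ_perm_fin_succ, ← Finset.univ_product_univ]
  simp only [Finset.sum_map, Equiv.toEmbedding_apply, Finset.sum_product]
  refine Finset.sum_congr rfl fun i _ => Fin.cases ?_ (fun i => ?_) i
  · simp only [permanent, Fin.prod_univ_succ, Finset.mul_sum,
      Equiv.Perm.decomposeFin_symm_apply_zero, Equiv.Perm.decomposeFin_symm_apply_succ,
      submatrix_apply, Fin.succAbove_zero, Equiv.swap_self, Equiv.refl_apply]
  · rw [permanent, Finset.mul_sum,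
      ← (Group.mulLeft_bijective i.cycleRange).sum_comp
        (fun σ => A i.succ 0 * ∏ k, (A.submatrix i.succ.succAbove Fin.succ) (σ k) k)]
    refine Finset.sum_congr rfl fun σ _ => ?_
    simp only [Fin.prod_univ_succ, Equiv.Perm.decomposeFin_symm_apply_zero,
      Equiv.Perm.decomposeFin_symm_apply_succ, submatrix_apply, Equiv.Perm.coe_mul,
      Function.comp_apply, Fin.succAbove_cycleRange]

theorem permanent_succ_column {n : ℕ} (A : Matrix (Fin (n + 1)) (Fin (n + 1)) R)
    (j : Fin (n + 1)) :
    A.permanent = ∑ i, A i j * (A.submatrix i.succAbove j.succAbove).permanent := by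
  rw [← permanent_permute_rows j.cycleRange.symm A, permanent_succ_column_zero]
  refine Finset.sum_congr rfl fun i _ => ?_
  congr 2
  · simp
  · ext k l
    simp [Fin.cycleRange_symm_succ]

theorem permanent_updateCol_eq_sum_mul_permanent_submatrix {n : ℕ}
    (A : Matrix (Fin (n + 1)) (Fin (n + 1)) R) (j : Fin (n + 1)) (u : Fin (n + 1) → R) :
    (A.updateCol j u).permanent = ∑ i, u i * (A.submatrix i.succAbove j.succAbove).permanent := by
  simp [permanent_succ_column _ j, submatrix_updateCol_succAbove]

theorem permanent_updateCol_eq_sum_perm {n : Type*} [DecidableEq n] [Fintype n]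
    (A : Matrix n n R) (j : n) (u : n → R) :
    (A.updateCol j u).permanent = ∑ σ : Equiv.Perm n, u (σ j) * ∏ k ∈ univ.erase j, A (σ k) k := by
  refine Finset.sum_congr rfl fun σ _ => ?_
  rw [← Finset.mul_prod_erase _ _ (mem_univ j), updateCol_self]
  congr 1
  exact Finset.prod_congr rfl fun k hk => updateCol_ne (ne_of_mem_erase hk)

theorem hadamard_vecMulVec_one_one {m n : Type*} (A : Matrix m n R) : A ⊙ vecMulVec 1 1 = A := by
  ext i j
  simp

theorem hasDerivAt_permanent_add_smul {𝕜 : Type*} [NontriviallyNormedField 𝕜] {n : ℕ}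
    (M N : Matrix (Fin (n + 1)) (Fin (n + 1)) 𝕜) :
    HasDerivAt (fun t : 𝕜 => (M + t • N).permanent)
      (∑ i, ∑ j, N i j * (M.submatrix i.succAbove j.succAbove).permanent) 0 := by
  have hentry : ∀ i j, HasDerivAt (fun t : 𝕜 => (M + t • N) i j) (N i j) 0 := fun i j => by
    simpa using ((hasDerivAt_id (0 : 𝕜)).mul_const (N i j)).const_add (M i j)
  have hsum : HasDerivAt (fun t : 𝕜 => ∑ σ : Equiv.Perm (Fin (n + 1)), ∏ k, (M + t • N) (σ k) k)
      (∑ σ : Equiv.Perm (Fin (n + 1)), ∑ k,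
        (∏ l ∈ univ.erase k, (M + (0 : 𝕜) • N) (σ l) l) • N (σ k) k) 0 :=
    HasDerivAt.fun_sum fun σ _ => HasDerivAt.fun_finsetProd fun k _ => hentry (σ k) k
  refine hsum.congr_deriv ?_
  simp only [zero_smul, add_zero, smul_eq_mul]
  rw [Finset.sum_comm]
  conv_rhs => rw [Finset.sum_comm]
  -- the terms of column `j` make up the permanent of `M` with its `j`-th column taken from `N`
  refine Finset.sum_congr rfl fun j _ => ?_
  rw [← permanent_updateCol_eq_sum_mul_permanent_submatrix M j (fun i => N i j),
    permanent_updateCol_eq_sum_perm]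
  simp_rw [mul_comm]

end Matrix

theorem HasDerivAt.le_of_eq_of_forall_ge_le {f g : ℝ → ℝ} {f' g' a : ℝ}
    (hf : HasDerivAt f f' a) (hg : HasDerivAt g g' a) (ha : f a = g a)
    (hle : ∀ t, a ≤ t → f t ≤ g t) : f' ≤ g' := by
  have hmax : IsLocalMaxOn (f - g) (Set.Ici a) a :=
    eventually_nhdsWithin_of_forall fun t ht => by
      simpa [ha] using hle t ht
  have hright : (1 : ℝ) ∈ posTangentConeAt (Set.Ici a) a :=
    mem_posTangentConeAt_of_segment_subset (by simp [segment_eq_Icc, Set.Icc_subset_Ici_self])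
  have := hmax.hasFDerivWithinAt_nonpos (hf.sub hg).hasDerivWithinAt.hasFDerivWithinAt hright
  simpa [sub_nonpos] using this

theorem hasDerivAt_prod_one_add_mul {𝕜 ι : Type*} [NontriviallyNormedField 𝕜] (s : Finset ι)
    (x : ι → 𝕜) : HasDerivAt (fun t => ∏ i ∈ s, (1 + t * x i)) (∑ i ∈ s, x i) 0 := by
  classical
  have hfactor : ∀ i ∈ s, HasDerivAt (fun t => 1 + t * x i) (x i) 0 := fun i _ => by
    simpa using ((hasDerivAt_id (0 : 𝕜)).mul_const (x i)).const_add 1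
  simpa using HasDerivAt.fun_finsetProd hfactor

theorem hasDerivAt_permanent_add_smul_hadamard_vecMulVec {n : ℕ}
    (A : Matrix (Fin (n + 1)) (Fin (n + 1)) ℂ) (v : Fin (n + 1) → ℂ) :
    HasDerivAt (fun t : ℂ => (A + t • (A ⊙ vecMulVec (star v) v)).permanent)
      (∑ i, ∑ j, (starRingEnd ℂ) (v i) * Fmat A i j * v j) 0 := by
  refine (hasDerivAt_permanent_add_smul A _).congr_deriv ?_
  refine Finset.sum_congr rfl fun i _ => Finset.sum_congr rfl fun j _ => ?_
  simp only [Fmat, hadamard_apply, vecMulVec_apply, Pi.star_apply, Complex.star_def, of_apply]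
  ring

theorem stmt4_general {n : ℕ} (A : Matrix (Fin (n + 1)) (Fin (n + 1)) ℂ)
    (h : ∀ B : Matrix (Fin (n + 1)) (Fin (n + 1)) ℂ, B.PosSemidef →
      (Matrix.hadamard A B).permanent.re ≤ A.permanent.re * ∏ i, (B i i).re) :
    ∀ v : Fin (n + 1) → ℂ,
      (∑ i, ∑ j, (starRingEnd ℂ) (v i) * Fmat A i j * v j).re ≤
        A.permanent.re * ∑ i, ‖v i‖ ^ 2 := by
  intro v
  set B : ℝ → Matrix (Fin (n + 1)) (Fin (n + 1)) ℂ :=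
    fun t => vecMulVec 1 1 + (t : ℂ) • vecMulVec (star v) v
  have hJ : (vecMulVec 1 1 : Matrix (Fin (n + 1)) (Fin (n + 1)) ℂ).PosSemidef := by
    simpa using posSemidef_vecMulVec_star_self (1 : Fin (n + 1) → ℂ)
  have hB_psd : ∀ t : ℝ, 0 ≤ t → (B t).PosSemidef := fun t ht =>
    hJ.add ((posSemidef_vecMulVec_star_self v).smul (Complex.zero_le_real.2 ht))
  have hB_diag : ∀ (t : ℝ) i, (B t i i).re = 1 + t * ‖v i‖ ^ 2 := fun t i => by
    simp [B, vecMulVec_apply, Complex.conj_mul', ← Complex.ofReal_pow]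
  have hAB : ∀ t : ℝ, A ⊙ B t = A + (t : ℂ) • (A ⊙ vecMulVec (star v) v) := fun t => by
    rw [hadamard_add, hadamard_smul, hadamard_vecMulVec_one_one]
  have hderiv : HasDerivAt (fun t : ℝ => (A ⊙ B t).permanent.re)
      (∑ i, ∑ j, (starRingEnd ℂ) (v i) * Fmat A i j * v j).re 0 := by
    simpa only [hAB] using HasDerivAt.real_of_complex (z := 0)
      (by simpa using hasDerivAt_permanent_add_smul_hadamard_vecMulVec A v)
  have hderiv_bound : HasDerivAt (fun t : ℝ => A.permanent.re * ∏ i, (B t i i).re)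
      (A.permanent.re * ∑ i, ‖v i‖ ^ 2) 0 := by
    simpa only [hB_diag] using (hasDerivAt_prod_one_add_mul univ _).const_mul A.permanent.re
  refine hderiv.le_of_eq_of_forall_ge_le hderiv_bound ?_ fun t ht => h _ (hB_psd t ht)
  simp [hAB, hB_diag]

/-- If `A` is positive semidefinite Hermitian and
`per(A ∘ B) ≤ per(A) · ∏ i, B i i` for every positive semidefinite Hermitian `B`, then
`v* F_A v ≤ per(A) · ‖v‖₂²` for every vector `v`, i.e. `λ_max(F_A) ≤ per(A)`. -/
theorem stmt4 {n : ℕ} (A : Matrix (Fin (n + 1)) (Fin (n + 1)) ℂ) (hA : A.PosSemidef)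
    (h : ∀ B : Matrix (Fin (n + 1)) (Fin (n + 1)) ℂ, B.PosSemidef →
      (Matrix.hadamard A B).permanent.re ≤ A.permanent.re * ∏ i, (B i i).re) :
    ∀ v : Fin (n + 1) → ℂ,
      (∑ i, ∑ j, (starRingEnd ℂ) (v i) * Fmat A i j * v j).re ≤
        A.permanent.re * ∑ i, ‖v i‖ ^ 2 :=
  stmt4_general A h
end

section
/- Let A ∈ H_n (with n ≥ 1) be such that per(A∘B) ≤ per(A)·∏_{i=1}^n b_{i,i} holds for every B = [b_{i,j}] ∈ H_n all of whose entries are nonnegative real numbers. Then for every real vector v ∈ ℝ^n one has ∑_{i,j} v_i·Re(f_{i,j})·v_j ≤ per(A)·‖v‖₂²; equivalently, the largest eigenvalue of the real symmetric matrix Re(F_A) (the entrywise real part of F_A) is at most per(A). -/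
/-!
Test the hypothesis on `B_t = J + t v vᵀ` (entries `1 + t v_i v_j`): it is positive semidefinite
for `t ≥ 0` and entrywise nonnegative for small `t`. At `t = 0` both sides of the hypothesis equal
`per A`, so comparing them for small `t > 0` compares their derivatives at `0`. The right side has
derivative `per(A) ‖v‖²`. Expanding `per (A ∘ B_t)` to first order in `t` and grouping the
permutations by the value `σ j = i` gives the derivative `∑ v_i v_j Re f_{ij}` of the left side.
-/

open Matrix Finset
open scoped ComplexOrder

open Equiv Filter Topology

theorem Equiv.optionCongr_removeNone {α β : Type*} {e : Option α ≃ Option β}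
    (h : e none = none) : optionCongr (removeNone e) = e := by
  ext (_ | x) : 1
  · simp [h]
  · obtain ⟨y, hy⟩ := Option.ne_none_iff_exists'.mp fun hx =>
      Option.some_ne_none x (e.injective (hx.trans h.symm))
    simp [removeNone_some e ⟨y, hy⟩, hy]

theorem hasDerivAt_prod_one_add_smul {𝕜 𝔸 ι : Type*} [NontriviallyNormedField 𝕜]
    [NormedCommRing 𝔸] [NormedAlgebra 𝕜 𝔸] (s : Finset ι) (d : ι → 𝔸) :
    HasDerivAt (fun t : 𝕜 => ∏ m ∈ s, (1 + t • d m)) (∑ m ∈ s, d m) 0 := by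
  classical
  simpa using HasDerivAt.fun_finsetProd (u := s) (x := (0 : 𝕜))
    fun m _ => ((hasDerivAt_id (0 : 𝕜)).smul_const (d m)).const_add 1

theorem HasDerivAt.le_of_eventually_le_nhdsGT {f g : ℝ → ℝ} {f' g' a : ℝ}
    (hf : HasDerivAt f f' a) (hg : HasDerivAt g g' a) (ha : f a = g a)
    (hle : ∀ᶠ t in 𝓝[>] a, f t ≤ g t) : f' ≤ g' := by
  have hslope := (hasDerivAt_iff_tendsto_slope.mp (hg.sub hf)).mono_left (nhdsGT_le_nhdsNE a)
  refine sub_nonneg.mp (ge_of_tendsto hslope ?_)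
  filter_upwards [hle, self_mem_nhdsWithin] with t ht (hat : a < t)
  rw [slope_def_field]
  exact div_nonneg (by simp [ha, ht]) (sub_nonneg.mpr hat.le)

namespace Matrix

variable {R : Type*} [CommSemiring R] {n : ℕ}

-- A permutation with `σ k = i`, conjugated by `finSuccEquiv'`, is a permutation of
-- `Option (Fin n)` fixing `none`, i.e. `optionCongr τ` for a unique `τ : Perm (Fin n)`.
theorem sum_filter_perm_prod_eq_mul_permanent_submatrix
    (A : Matrix (Fin (n + 1)) (Fin (n + 1)) R) (i k : Fin (n + 1)) :
    ∑ σ : Perm (Fin (n + 1)) with σ k = i, ∏ m, A (σ m) m =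
      A i k * (A.submatrix i.succAbove k.succAbove).permanent := by
  rw [permanent, Finset.mul_sum]
  symm
  refine Finset.sum_nbij'
    (fun τ => (finSuccEquiv' k).trans ((optionCongr τ).trans (finSuccEquiv' i).symm))
    (fun σ => removeNone ((finSuccEquiv' k).symm.trans (σ.trans (finSuccEquiv' i))))
    ?_ ?_ ?_ ?_ ?_
  · intro τ _
    simp
  · intro σ _
    simp
  · intro τ _
    convert removeNone_optionCongr τ
    ext x : 1
    simp
  · intro σ hσ
    replace hσ : σ k = i := by simpa using hσ
    rw [optionCongr_removeNone (by simp [hσ])]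
    ext x : 1
    simp
  · intro τ _
    rw [Fin.prod_univ_succAbove _ k]
    simp

theorem sum_perm_prod_mul_sum_eq_sum_mul_permanent_submatrix
    (A X : Matrix (Fin (n + 1)) (Fin (n + 1)) R) :
    ∑ σ : Perm (Fin (n + 1)), (∏ m, A (σ m) m) * ∑ m, X (σ m) m =
      ∑ i, ∑ j, X i j * (A i j * (A.submatrix i.succAbove j.succAbove).permanent) := by
  simp_rw [Finset.mul_sum]
  rw [Finset.sum_comm]
  conv_rhs => rw [Finset.sum_comm]
  refine Finset.sum_congr rfl fun j _ => ?_
  rw [← Finset.sum_fiberwise Finset.univ (fun σ : Perm (Fin (n + 1)) => σ j)]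
  refine Finset.sum_congr rfl fun i _ => ?_
  rw [← sum_filter_perm_prod_eq_mul_permanent_submatrix, Finset.mul_sum]
  refine Finset.sum_congr rfl fun σ hσ => ?_
  rw [(Finset.mem_filter.mp hσ).2, mul_comm]

theorem hasDerivAt_permanent_hadamard_one_add_smul {𝕜 𝔸 : Type*}
    [NontriviallyNormedField 𝕜] [NormedCommRing 𝔸] [NormedAlgebra 𝕜 𝔸]
    (A X : Matrix (Fin (n + 1)) (Fin (n + 1)) 𝔸) :
    HasDerivAt (fun t : 𝕜 => (A ⊙ of fun i j => 1 + t • X i j).permanent)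
      (∑ i, ∑ j, X i j * (A i j * (A.submatrix i.succAbove j.succAbove).permanent)) 0 := by
  rw [← sum_perm_prod_mul_sum_eq_sum_mul_permanent_submatrix]
  simp only [permanent, hadamard_apply, of_apply, Finset.prod_mul_distrib]
  exact HasDerivAt.fun_sum fun σ _ =>
    (hasDerivAt_prod_one_add_smul Finset.univ fun m => X (σ m) m).const_mul _

end Matrix

section OnesAddVecMulVec

variable {ι : Type*}

noncomputable def onesAddVecMulVec (v : ι → ℝ) (t : ℝ) : Matrix ι ι ℂ :=
  of fun i j => ((1 + t * (v i * v j) : ℝ) : ℂ)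

theorem onesAddVecMulVec_eq_one_add_smul (v : ι → ℝ) (t : ℝ) :
    onesAddVecMulVec v t = of fun i j => 1 + t • (v i * v j : ℂ) := by
  ext i j
  simp [onesAddVecMulVec, Complex.real_smul]

theorem posSemidef_onesAddVecMulVec [Fintype ι] (v : ι → ℝ) {t : ℝ} (ht : 0 ≤ t) :
    (onesAddVecMulVec v t).PosSemidef := by
  have hsplit : onesAddVecMulVec v t = vecMulVec 1 (star 1) +
      t • vecMulVec (fun i => (v i : ℂ)) (star fun i => (v i : ℂ)) := by
    ext i j
    simp [onesAddVecMulVec_eq_one_add_smul, vecMulVec_apply]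
  rw [hsplit]
  exact (posSemidef_vecMulVec_self_star 1).add ((posSemidef_vecMulVec_self_star _).smul ht)

theorem eventually_onesAddVecMulVec_real_nonneg [Finite ι] (v : ι → ℝ) :
    ∀ᶠ t in 𝓝 0, ∀ i j,
      (onesAddVecMulVec v t i j).im = 0 ∧ 0 ≤ (onesAddVecMulVec v t i j).re := by
  refine eventually_all.2 fun i => eventually_all.2 fun j => ?_
  have hlim : Tendsto (fun t : ℝ => 1 + t * (v i * v j)) (𝓝 0) (𝓝 1) :=
    (by fun_prop : Continuous fun t : ℝ => 1 + t * (v i * v j)).tendsto' 0 1 (by simp)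
  filter_upwards [hlim.eventually (lt_mem_nhds one_pos)] with t ht
  simpa [onesAddVecMulVec] using ht.le

theorem hasDerivAt_prod_diag_onesAddVecMulVec [Fintype ι] (v : ι → ℝ) :
    HasDerivAt (fun t => ∏ i, (onesAddVecMulVec v t i i).re) (∑ i, v i ^ 2) 0 := by
  simpa [onesAddVecMulVec, sq] using
    hasDerivAt_prod_one_add_smul (𝕜 := ℝ) Finset.univ fun i => v i * v i

end OnesAddVecMulVec

theorem hasDerivAt_re_permanent_hadamard_onesAddVecMulVec {n : ℕ}
    (A : Matrix (Fin (n + 1)) (Fin (n + 1)) ℂ) (v : Fin (n + 1) → ℝ) :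
    HasDerivAt (fun t => (A ⊙ onesAddVecMulVec v t).permanent.re)
      (∑ i, ∑ j, v i * (Fmat A i j).re * v j) 0 := by
  simp only [onesAddVecMulVec_eq_one_add_smul]
  refine (Complex.reCLM.hasFDerivAt.comp_hasDerivAt (0 : ℝ)
    (hasDerivAt_permanent_hadamard_one_add_smul A (of fun i j => (v i * v j : ℂ)))).congr_deriv ?_
  simp only [map_sum, Complex.reCLM_apply, Fmat, of_apply]
  refine Finset.sum_congr rfl fun i _ => Finset.sum_congr rfl fun j _ => ?_
  simp [Complex.mul_re]
  ring

theorem stmt5_general {n : ℕ} (A : Matrix (Fin (n + 1)) (Fin (n + 1)) ℂ)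
    (h : ∀ B : Matrix (Fin (n + 1)) (Fin (n + 1)) ℂ, B.PosSemidef →
      (∀ i j, (B i j).im = 0 ∧ 0 ≤ (B i j).re) →
      (Matrix.hadamard A B).permanent.re ≤ A.permanent.re * ∏ i, (B i i).re) :
    ∀ v : Fin (n + 1) → ℝ,
      (∑ i, ∑ j, v i * (Fmat A i j).re * v j) ≤ A.permanent.re * ∑ i, (v i) ^ 2 := by
  intro v
  have hle : ∀ᶠ t in 𝓝[>] 0, (A ⊙ onesAddVecMulVec v t).permanent.re ≤
      A.permanent.re * ∏ i, (onesAddVecMulVec v t i i).re := by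
    filter_upwards [eventually_nhdsWithin_of_eventually_nhds
      (eventually_onesAddVecMulVec_real_nonneg v), self_mem_nhdsWithin] with t hreal (ht : 0 < t)
    exact h _ (posSemidef_onesAddVecMulVec v ht.le) hreal
  have hzero : A ⊙ onesAddVecMulVec v 0 = A := by
    ext i j
    simp [onesAddVecMulVec]
  refine (hasDerivAt_re_permanent_hadamard_onesAddVecMulVec A v).le_of_eventually_le_nhdsGT
    ((hasDerivAt_prod_diag_onesAddVecMulVec v).const_mul _) ?_ hle
  simp only [hzero]
  simp [onesAddVecMulVec]

/-- If `A` is positive semidefinite Hermitian and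
`per(A ∘ B) ≤ per(A) · ∏ i, B i i` for every positive semidefinite Hermitian `B` all of whose
entries are nonnegative reals, then for every real vector `v`,
`∑ i j, v i · Re(f i j) · v j ≤ per(A) · ‖v‖₂²`, i.e. `λ_max(Re F_A) ≤ per(A)`. -/
theorem stmt5 {n : ℕ} (A : Matrix (Fin (n + 1)) (Fin (n + 1)) ℂ) (hA : A.PosSemidef)
    (h : ∀ B : Matrix (Fin (n + 1)) (Fin (n + 1)) ℂ, B.PosSemidef →
      (∀ i j, (B i j).im = 0 ∧ 0 ≤ (B i j).re) →
      (Matrix.hadamard A B).permanent.re ≤ A.permanent.re * ∏ i, (B i i).re) :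
    ∀ v : Fin (n + 1) → ℝ,
      (∑ i, ∑ j, v i * (Fmat A i j).re * v j) ≤ A.permanent.re * ∑ i, (v i) ^ 2 :=
  stmt5_general A h
end

section
/- If A ∈ H_n (with n ≥ 1), then the matrix F_A is also positive semidefinite Hermitian, i.e. F_A ∈ H_n. -/
open Matrix Finset
open scoped ComplexOrder

/-!
Write `A = Bᴴ * B`. A permanental Cauchy–Binet identity expresses `(n - 1)! • per (A(i,j))` as
`∑ t, conj (per B[t, î]) * per B[t, ĵ]`, so the matrix of the `per (A(i,j))` is a nonnegative
multiple of a Gram matrix, hence positive semidefinite. `F_A` is its entrywise product with `A`,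
which is positive semidefinite by the Schur product theorem.
-/

namespace Matrix

variable {ι κ R : Type*} [Fintype ι] [DecidableEq ι]

theorem permanent_eq_sum_prod_perm_apply [CommSemiring R] (M : Matrix ι ι R)
    (σ : Equiv.Perm ι) : M.permanent = ∑ τ : Equiv.Perm ι, ∏ i, M (σ i) (τ i) := by
  rw [← permanent_permute_cols σ, ← permanent_transpose]
  rfl

theorem factorial_smul_permanent_conjTranspose_mul [CommSemiring R] [StarRing R] [Fintype κ]
    (U V : Matrix κ ι R) :
    (Fintype.card ι).factorial • (Uᴴ * V).permanent =
      ∑ t : ι → κ, star (U.submatrix t id).permanent * (V.submatrix t id).permanent := by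
  have expand (t : ι → κ) : star (U.submatrix t id).permanent * (V.submatrix t id).permanent =
      ∑ σ : Equiv.Perm ι, ∑ τ : Equiv.Perm ι, ∏ i, star (U (t i) (σ i)) * V (t i) (τ i) := by
    simp only [permanent_eq_sum_prod_perm_apply _ 1, star_sum, star_prod, sum_mul_sum,
      ← prod_mul_distrib, submatrix_apply, Equiv.Perm.one_apply, id]
  have gram (σ τ : Equiv.Perm ι) : ∑ t : ι → κ, ∏ i, star (U (t i) (σ i)) * V (t i) (τ i) =
      ∏ i, (Uᴴ * V) (σ i) (τ i) := by
    simp only [mul_apply, conjTranspose_apply]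
    exact (Fintype.prod_sum fun i j => star (U j (σ i)) * V j (τ i)).symm
  simp_rw [expand, sum_comm (γ := ι → κ), gram, ← permanent_eq_sum_prod_perm_apply, sum_const,
    card_univ, Fintype.card_perm]

theorem PosSemidef.permanent_submatrix {𝕜 ι' : Type*} [RCLike 𝕜] [Fintype κ] [DecidableEq κ]
    [Finite ι'] {A : Matrix ι ι 𝕜} (hA : A.PosSemidef) (f : ι' → κ → ι) :
    (of fun a b => (A.submatrix (f a) (f b)).permanent).PosSemidef := by
  open scoped MatrixOrder in
  obtain ⟨B, rfl⟩ := CStarAlgebra.nonneg_iff_eq_star_mul_self.mp hA.nonneg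
  set W : Matrix (κ → ι) ι' 𝕜 := of fun t a => (B.submatrix t (f a)).permanent
  have hW : ((Fintype.card κ).factorial : ℝ) •
      (of fun a b => ((star B * B).submatrix (f a) (f b)).permanent) = Wᴴ * W := by
    ext a b
    rw [smul_apply, Nat.cast_smul_eq_nsmul, of_apply, star_eq_conjTranspose,
      submatrix_mul _ _ _ id _ Function.bijective_id, ← conjTranspose_submatrix,
      factorial_smul_permanent_conjTranspose_mul]
    simp [W, mul_apply]
  have hWW := (posSemidef_conjTranspose_mul_self W).smul
    (inv_nonneg.mpr (Nat.cast_nonneg (Fintype.card κ).factorial : (0 : ℝ) ≤ _))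
  rwa [← hW, inv_smul_smul₀ (by positivity)] at hWW

end Matrix

/-- If `A` is positive semidefinite Hermitian, then so is `F_A`. -/
theorem stmt11 {n : ℕ} (A : Matrix (Fin (n + 1)) (Fin (n + 1)) ℂ) (hA : A.PosSemidef) :
    (Fmat A).PosSemidef :=
  hA.hadamard (hA.permanent_submatrix Fin.succAbove)
end
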